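/- Let D be a rooted digraph with root o, with all finite-radius out-balls and in-balls finite, and let g be an elliptic self-embedding of D. Then the forward orbit {g^i(o) : i ∈ ℕ} is finite, and there exists i ≥ 1 with g^i(o) = o. -/
import Mathlib


/-- There is a directed walk of length at most `n` from `x` to `y` along the edge relation `E`. -/
def StepsLe {V : Type*} (E : V → V → Prop) : ℕ → V → V → Prop
  | 0, x, y => x = y
  | n + 1, x, y => x = y ∨ ∃ z, E x z ∧ StepsLe E n z y

/-- The directed distance in the digraph with edge relation `E`, with value `⊤` if there is
no directed path. -/
noncomputable def ddist {V : Type*} (E : V → V → Prop) (x y : V) : ℕ∞ :=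
  sInf {m : ℕ∞ | ∃ n : ℕ, m = (n : ℕ∞) ∧ StepsLe E n x y}

private lemma stepsLe_map {V : Type*} {E : V → V → Prop} {g : V → V}
    (hg_adj : ∀ x y, E x y ↔ E (g x) (g y)) :
    ∀ n x y, StepsLe E n x y → StepsLe E n (g x) (g y) := by
  intro n
  induction n with
  | zero => intro x y h; exact congrArg g h
  | succ n ih =>
    rintro x y (rfl | ⟨z, hz, hs⟩)
    · exact Or.inl rfl
    · exact Or.inr ⟨g z, (hg_adj x z).mp hz, ih z y hs⟩

private lemma ddist_map_le {V : Type*} {E : V → V → Prop} {g : V → V}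
    (hg_adj : ∀ x y, E x y ↔ E (g x) (g y)) (x y : V) :
    ddist E (g x) (g y) ≤ ddist E x y := by
  apply sInf_le_sInf
  rintro m ⟨n, rfl, hs⟩
  exact ⟨n, rfl, stepsLe_map hg_adj n x y hs⟩

/-- For an elliptic self-embedding of a rooted digraph with finite balls, the forward orbit
of the root is finite and the root is periodic. -/
theorem stmt15 {V : Type*} (E : V → V → Prop) (o : V)
    (hroot : ∀ v : V, ddist E o v ≠ ⊤)
    (hballs : ∀ (v : V) (n : ℕ),
      {w : V | ddist E v w ≤ (n : ℕ∞)}.Finite ∧ {w : V | ddist E w v ≤ (n : ℕ∞)}.Finite)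
    (g : V → V) (hg_inj : Function.Injective g)
    (hg_adj : ∀ x y, E x y ↔ E (g x) (g y))
    (hell : ∃ F : Set V, F.Finite ∧ F.Nonempty ∧ g '' F = F) :
    {v : V | ∃ i : ℕ, g^[i] o = v}.Finite ∧ ∃ i : ℕ, 1 ≤ i ∧ g^[i] o = o := by
  obtain ⟨F, hFfin, ⟨u0, hu0⟩, hFinv⟩ := hell
  lift ddist E o u0 to ℕ using hroot u0 with N hN
  set S : Set V := {x | ∃ u ∈ F, ddist E x u ≤ (N : ℕ∞)} with hS
  have hSfin : S.Finite := by
    have : S ⊆ ⋃ u ∈ F, {w : V | ddist E w u ≤ (N : ℕ∞)} := by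
      rintro x ⟨u, hu, hx⟩
      exact Set.mem_biUnion hu hx
    exact Set.Finite.subset (hFfin.biUnion fun u _ => (hballs u N).2) this
  have hoS : o ∈ S := ⟨u0, hu0, le_of_eq hN.symm⟩
  have hginv : ∀ x ∈ S, g x ∈ S := by
    rintro x ⟨u, hu, hx⟩
    refine ⟨g u, ?_, le_trans (ddist_map_le hg_adj x u) hx⟩
    rw [← hFinv]; exact ⟨u, hu, rfl⟩
  have horb : ∀ i : ℕ, g^[i] o ∈ S := by
    intro i
    induction i with
    | zero => exact hoS
    | succ i ih => rw [Function.iterate_succ_apply']; exact hginv _ ih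
  have horbsub : {v : V | ∃ i : ℕ, g^[i] o = v} ⊆ S := by
    rintro v ⟨i, rfl⟩; exact horb i
  refine ⟨hSfin.subset horbsub, ?_⟩
  have : ∃ i ∈ (Set.univ : Set ℕ), ∃ j ∈ (Set.univ : Set ℕ), i ≠ j ∧ g^[i] o = g^[j] o := by
    exact Set.infinite_univ.exists_ne_map_eq_of_mapsTo (fun i _ => horb i) hSfin
  obtain ⟨i, -, j, -, hij, heq⟩ := this
  rcases hij.lt_or_gt with h | h
  · refine ⟨j - i, by omega, ?_⟩
    have : g^[i] (g^[j - i] o) = g^[i] o := by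
      rw [← Function.iterate_add_apply, Nat.add_sub_cancel' h.le, ← heq]
    exact (hg_inj.iterate i) this
  · refine ⟨i - j, by omega, ?_⟩
    have : g^[j] (g^[i - j] o) = g^[j] o := by
      rw [← Function.iterate_add_apply, Nat.add_sub_cancel' h.le, heq]
    exact (hg_inj.iterate j) this
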